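/- arXiv:1809.09354 — 2 statements merged into one kernel-verified Lean document; each statement's English description precedes it below -/
import Mathlib

section
/- If f : ℝⁿ → ℝ satisfies f(x + t eᵢ) ≤ f(x) + t ∇ᵢf(x) + (Lᵢ/2) t² for all x, t and each i ∈ [n] with constants Lᵢ > 0, then f is M-smooth with M = n · Diag(L₁, …, Lₙ), i.e., f(x+h) ≤ f(x) + ⟨∇f(x), h⟩ + (n/2) Σᵢ Lᵢ hᵢ² for all x, h ∈ ℝⁿ. -/
/-! Write `x + h = (1/n) ∑ᵢ (x + n hᵢ eᵢ)`, a uniform convex combination of points that each differ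
from `x` in a single coordinate. Jensen's inequality bounds `f (x + h)` by the average of the
`f (x + n hᵢ eᵢ)`, and the coordinate-wise bound with step `t = n hᵢ` turns the quadratic terms
`Lᵢ (n hᵢ)² / 2`, divided by `n`, into `n Lᵢ hᵢ² / 2`. -/

open Finset

theorem ConvexOn.map_add_sum_le_average {E : Type*} [AddCommGroup E] [Module ℝ E] {f : E → ℝ}
    (hf : ConvexOn ℝ Set.univ f) {ι : Type*} [Fintype ι] [Nonempty ι] (x : E) (d : ι → E) :
    f (x + ∑ i, d i) ≤ (∑ i, f (x + (Fintype.card ι : ℝ) • d i)) / Fintype.card ι := by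
  have hcard : (0 : ℝ) < Fintype.card ι := by exact_mod_cast Fintype.card_pos
  have hmean : ∑ i, (Fintype.card ι : ℝ)⁻¹ • (x + (Fintype.card ι : ℝ) • d i) = x + ∑ i, d i := by
    simp only [smul_add, smul_smul, inv_mul_cancel₀ hcard.ne', one_smul, sum_add_distrib,
      sum_const, card_univ, ← Nat.cast_smul_eq_nsmul ℝ, mul_inv_cancel₀ hcard.ne']
  have := hf.map_sum_le (t := univ) (w := fun _ => (Fintype.card ι : ℝ)⁻¹)
    (p := fun i => x + (Fintype.card ι : ℝ) • d i) (fun _ _ => by positivity)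
    (by simp [card_univ, hcard.ne']) (fun _ _ => Set.mem_univ _)
  rw [hmean, ← smul_sum, smul_eq_mul, inv_mul_eq_div] at this
  exact this

theorem matrix_smoothness_of_coordinate_smoothness_general
    (n : ℕ)
    (f : (Fin n → ℝ) → ℝ) (g : (Fin n → ℝ) → (Fin n → ℝ))  -- g = gradient of f
    (hf : ConvexOn ℝ Set.univ f)
    (L : Fin n → ℝ)
    (hcoord : ∀ (i : Fin n) (x : Fin n → ℝ) (t : ℝ),
      f (x + Pi.single i t) ≤ f x + t * g x i + L i / 2 * t ^ 2) :
    ∀ x h : Fin n → ℝ,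
      f (x + h) ≤ f x + (∑ i, g x i * h i) + (n : ℝ) / 2 * ∑ i, L i * (h i) ^ 2 := by
  intro x h
  rcases n.eq_zero_or_pos with rfl | hn
  · rw [Subsingleton.elim (x + h) x]
    simp
  have : Nonempty (Fin n) := ⟨⟨0, hn⟩⟩
  have hn' : (n : ℝ) ≠ 0 := by positivity
  calc f (x + h) = f (x + ∑ i, Pi.single i (h i)) := by rw [univ_sum_single]
    _ ≤ (∑ i, f (x + Pi.single i (n * h i))) / n := by
        simpa only [← Pi.single_smul', smul_eq_mul, Fintype.card_fin] using
          hf.map_add_sum_le_average x fun i => Pi.single i (h i)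
    _ ≤ (∑ i, (f x + n * h i * g x i + L i / 2 * (n * h i) ^ 2)) / n := by
        gcongr with i
        exact hcoord i x _
    _ = ∑ i, (f x / n + g x i * h i + n / 2 * (L i * h i ^ 2)) := by
        rw [sum_div]
        refine sum_congr rfl fun i _ => ?_
        field_simp
    _ = f x + (∑ i, g x i * h i) + (n : ℝ) / 2 * ∑ i, L i * (h i) ^ 2 := by
        simp only [sum_add_distrib, sum_const, card_univ, Fintype.card_fin, nsmul_eq_mul, mul_sum]
        field_simp

/-- If a convex `f` satisfies coordinate-wise smoothness with constants `Lᵢ > 0`,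
then `f` is `M`-smooth with `M = n · Diag(L)`. -/
theorem matrix_smoothness_of_coordinate_smoothness
    (n : ℕ)
    (f : (Fin n → ℝ) → ℝ) (g : (Fin n → ℝ) → (Fin n → ℝ))  -- g = gradient of f
    (hf : ConvexOn ℝ Set.univ f)
    (L : Fin n → ℝ) (hL : ∀ i, 0 < L i)
    (hcoord : ∀ (i : Fin n) (x : Fin n → ℝ) (t : ℝ),
      f (x + Pi.single i t) ≤ f x + t * g x i + L i / 2 * t ^ 2) :
    ∀ x h : Fin n → ℝ,
      f (x + h) ≤ f x + (∑ i, g x i * h i) + (n : ℝ) / 2 * ∑ i, L i * (h i) ^ 2 :=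
  matrix_smoothness_of_coordinate_smoothness_general n f g hf L hcoord
end

section
/- Let P, M ∈ ℝ^{n×n} be symmetric with P having positive diagonal entries pᵢ, and let D = Diag(p), P' = D^{-1/2} P D^{-1/2}, M' = D^{-1} M D^{-1}. Suppose P ∘ M is PSD. Then the vector v with vᵢ = λ_max(P' ∘ M') · pᵢ² satisfies the ESO inequality P ∘ M ⪯ Diag(p₁v₁, …, pₙvₙ); equivalently, P ∘ M ⪯ λ_max(P' ∘ M') · Diag(p)³. -/
/-!
The matrix `P' ∘ M'` is the congruence `S⁻¹ (P ∘ M) S⁻¹` with `S = Diag(p)^{3/2}`, since the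
diagonal scalings of the two Hadamard factors multiply. It is therefore symmetric, so
`P' ∘ M' ⪯ λ_max(P' ∘ M') I`, and conjugating this Loewner inequality by `S` gives
`P ∘ M ⪯ λ_max(P' ∘ M') S² = λ_max(P' ∘ M') Diag(p)³`.
-/

/-- The largest eigenvalue of a real matrix, as the supremum of its eigenvalue set. -/
noncomputable def lamMax {n : ℕ} (M : Matrix (Fin n) (Fin n) ℝ) : ℝ :=
  sSup {r : ℝ | ∃ v : Fin n → ℝ, v ≠ 0 ∧ M.mulVec v = r • v}

open Matrix Module End
open scoped MatrixOrder

theorem Matrix.mem_spectrum_iff_exists_mulVec_eq_smul {ι K : Type*} [Fintype ι] [DecidableEq ι]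
    [Field K] {A : Matrix ι ι K} {r : K} :
    r ∈ spectrum K A ↔ ∃ v : ι → K, v ≠ 0 ∧ A *ᵥ v = r • v := by
  simp only [← spectrum_toLin', ← hasEigenvalue_iff_mem_spectrum, hasEigenvalue_iff,
    Submodule.ne_bot_iff, mem_eigenspace_iff, toLin'_apply]
  exact exists_congr fun v => and_comm

theorem lamMax_eq_sSup_spectrum {n : ℕ} (B : Matrix (Fin n) (Fin n) ℝ) :
    lamMax B = sSup (spectrum ℝ B) := by
  rw [lamMax]
  congr 1
  ext r
  exact mem_spectrum_iff_exists_mulVec_eq_smul.symm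

theorem Matrix.IsHermitian.le_lamMax_smul_one {n : ℕ} {B : Matrix (Fin n) (Fin n) ℝ}
    (hB : B.IsHermitian) : B ≤ lamMax B • (1 : Matrix (Fin n) (Fin n) ℝ) := by
  rw [← Algebra.algebraMap_eq_smul_one, lamMax_eq_sSup_spectrum]
  exact le_algebraMap_of_spectrum_le fun r hr => le_csSup B.finite_real_spectrum.bddAbove hr

theorem Matrix.IsHermitian.diagonal_mul_mul_diagonal_le_lamMax_smul {n : ℕ}
    {B : Matrix (Fin n) (Fin n) ℝ} (hB : B.IsHermitian) (d : Fin n → ℝ) :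
    diagonal d * B * diagonal d ≤ lamMax B • diagonal (d * d) := by
  have h := star_left_conjugate_le_conjugate hB.le_lamMax_smul_one (diagonal d)
  rwa [star_eq_conjTranspose, diagonal_conjTranspose, star_trivial, mul_smul_comm, mul_one,
    smul_mul_assoc, diagonal_mul_diagonal'] at h

theorem Matrix.diagonal_mul_mul_diagonal_hadamard {ι α : Type*} [Fintype ι] [DecidableEq ι]
    [CommSemiring α]
    (d₁ d₂ e₁ e₂ : ι → α) (A B : Matrix ι ι α) :
    (diagonal d₁ * A * diagonal d₂) ⊙ (diagonal e₁ * B * diagonal e₂)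
      = diagonal (d₁ * e₁) * (A ⊙ B) * diagonal (d₂ * e₂) := by
  ext i j
  simp only [hadamard_apply, mul_diagonal, diagonal_mul, Pi.mul_apply]
  ring

theorem Matrix.diagonal_mul_mul_diagonal_inv_cancel {ι K : Type*} [Fintype ι] [DecidableEq ι]
    [Field K] {s : ι → K} (hs : ∀ i, s i ≠ 0) (A : Matrix ι ι K) :
    diagonal s * (diagonal s⁻¹ * A * diagonal s⁻¹) * diagonal s = A := by
  ext i j
  simp only [mul_diagonal, diagonal_mul, Pi.inv_apply]
  field_simp [hs i, hs j]

theorem eso_from_lamMax_general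
    (n : ℕ)
    (M P : Matrix (Fin n) (Fin n) ℝ)
    (hPM : (Matrix.hadamard P M).PosSemidef)
    (p : Fin n → ℝ) (hp : ∀ i, 0 < p i) :
    (lamMax (Matrix.hadamard
        (Matrix.diagonal (fun i => (Real.sqrt (p i))⁻¹) * P *
          Matrix.diagonal (fun i => (Real.sqrt (p i))⁻¹))
        (Matrix.diagonal (fun i => (p i)⁻¹) * M * Matrix.diagonal (fun i => (p i)⁻¹)))
        • Matrix.diagonal (fun i => (p i) ^ 3)
      - Matrix.hadamard P M).PosSemidef := by
  set s : Fin n → ℝ := fun i => Real.sqrt (p i) * p i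
  have hs i : s i ≠ 0 := by have := hp i; positivity
  have hss : s * s = fun i => p i ^ 3 := funext fun i => by
    calc s i * s i = Real.sqrt (p i) ^ 2 * p i ^ 2 := by ring
      _ = p i ^ 3 := by rw [Real.sq_sqrt (hp i).le]; ring
  set B := (diagonal (fun i => (Real.sqrt (p i))⁻¹) * P * diagonal (fun i => (Real.sqrt (p i))⁻¹))
    ⊙ (diagonal (fun i => (p i)⁻¹) * M * diagonal (fun i => (p i)⁻¹))
  have hB : B = diagonal s⁻¹ * (P ⊙ M) * diagonal s⁻¹ := by
    simp only [B, diagonal_mul_mul_diagonal_hadamard]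
    congr <;> funext i <;> simp only [s, Pi.mul_apply, Pi.inv_apply, mul_inv]
  have hBherm : B.IsHermitian := by
    simpa [hB, diagonal_conjTranspose] using isHermitian_mul_mul_conjTranspose (diagonal s⁻¹) hPM.1
  have hsBs : diagonal s * B * diagonal s = P ⊙ M := by
    rw [hB, diagonal_mul_mul_diagonal_inv_cancel hs]
  have h := hBherm.diagonal_mul_mul_diagonal_le_lamMax_smul s
  rwa [hsBs, hss] at h

/-- The vector `v` with `vᵢ = λ_max(P' ∘ M') pᵢ²` satisfies the ESO inequality;
equivalently `P ∘ M ⪯ λ_max(P' ∘ M') · Diag(p)³`. -/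
theorem eso_from_lamMax
    (n : ℕ)
    (M P : Matrix (Fin n) (Fin n) ℝ)
    (hMsymm : M.IsSymm) (hPsymm : P.IsSymm)
    (hPM : (Matrix.hadamard P M).PosSemidef)
    (p : Fin n → ℝ) (hp : ∀ i, 0 < p i) (hPdiag : ∀ i, P i i = p i) :
    (lamMax (Matrix.hadamard
        (Matrix.diagonal (fun i => (Real.sqrt (p i))⁻¹) * P *
          Matrix.diagonal (fun i => (Real.sqrt (p i))⁻¹))
        (Matrix.diagonal (fun i => (p i)⁻¹) * M * Matrix.diagonal (fun i => (p i)⁻¹)))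
        • Matrix.diagonal (fun i => (p i) ^ 3)
      - Matrix.hadamard P M).PosSemidef :=
  eso_from_lamMax_general n M P hPM p hp
end
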